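/- arXiv:2509.16424 — 4 statements merged into one kernel-verified Lean document; each statement's English description precedes it below -/
import Mathlib

section
/- Let C ⊆ F_q^n be a linear code of dimension k with the Hamming metric. Then α_i(C) ≤ n - i + 1 for all 1 ≤ i ≤ n. Moreover: for 1 ≤ i ≤ k-1, equality holds if and only if C contains an i-dimensional MDS code; α_k(C) = n - k + 1 if and only if C is MDS; and for k+1 ≤ i ≤ n, equality holds if and only if C is contained in an i-dimensional MDS code. -/
open Module

/-- Hamming weight of a vector. -/
noncomputable def hwt {ι α : Type*} [Zero α] (x : ι → α) : ℕ := {i | x i ≠ 0}.ncard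

/-- Minimum distance (minimum weight of a nonzero element) of a code `D`. -/
noncomputable def dminN {𝔽 V : Type*} [Field 𝔽] [AddCommGroup V] [Module 𝔽 V]
    (wt : V → ℕ) (D : Submodule 𝔽 V) : ℕ :=
  sInf (wt '' {v : V | v ∈ D ∧ v ≠ 0})

/-- The `i`-th code distance of a code `C`: for `i ≤ dim C` the largest minimum distance of
an `i`-dimensional subcode of `C`, and for `i ≥ dim C` the largest minimum distance of an
`i`-dimensional supercode of `C` (both notions agree at `i = dim C`). -/
noncomputable def alphaN {𝔽 V : Type*} [Field 𝔽] [AddCommGroup V] [Module 𝔽 V]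
    (wt : V → ℕ) (C : Submodule 𝔽 V) (i : ℕ) : ℕ :=
  if i ≤ finrank 𝔽 C then
    sSup (dminN wt '' {D : Submodule 𝔽 V | D ≤ C ∧ finrank 𝔽 D = i})
  else
    sSup (dminN wt '' {D : Submodule 𝔽 V | C ≤ D ∧ finrank 𝔽 D = i})

/-! A nonzero codeword of an `i`-dimensional code vanishing on `i - 1` prescribed coordinates
exists because restricting to those coordinates has a nontrivial kernel; its weight is at most
`n - i + 1`, which is the Singleton bound. Since every code competing in `α_i(C)` obeys this bound,
the supremum attains `n - i + 1` exactly when some competitor is MDS; for `i = k` the only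
competitor is `C` itself. -/

lemma hwt_le_card_sub_of_eq_zero_on {ι α : Type*} [Fintype ι] [Zero α] {v : ι → α}
    {S : Finset ι} (hS : ∀ s ∈ S, v s = 0) : hwt v ≤ Fintype.card ι - S.card := by
  calc hwt v ≤ (↑S : Set ι)ᶜ.ncard :=
        Set.ncard_le_ncard fun j hj hjS => hj (hS j hjS)
    _ = Fintype.card ι - S.card := by
      rw [Set.ncard_compl, Set.ncard_coe_finset, Nat.card_eq_fintype_card]

lemma Submodule.exists_mem_ne_zero_eq_zero_on {𝔽 ι : Type*} [Field 𝔽] [Fintype ι]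
    (D : Submodule 𝔽 (ι → 𝔽)) {S : Finset ι} (hS : S.card < finrank 𝔽 D) :
    ∃ v ∈ D, v ≠ 0 ∧ ∀ s ∈ S, v s = 0 := by
  set restrict := (LinearMap.funLeft 𝔽 𝔽 ((↑) : S → ι)).comp D.subtype
  have hker : LinearMap.ker restrict ≠ ⊥ :=
    LinearMap.ker_ne_bot_of_finrank_lt (by simpa using hS)
  obtain ⟨w, hw, hw0⟩ := Submodule.exists_mem_ne_zero_of_ne_bot hker
  refine ⟨w, w.2, fun h => hw0 (Subtype.ext h), fun s hs => ?_⟩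
  simpa [restrict, LinearMap.funLeft_apply] using congrFun hw ⟨s, hs⟩

lemma dminN_le {𝔽 V : Type*} [Field 𝔽] [AddCommGroup V] [Module 𝔽 V] (wt : V → ℕ)
    {D : Submodule 𝔽 V} {v : V} (hv : v ∈ D) (hv0 : v ≠ 0) : dminN wt D ≤ wt v :=
  Nat.sInf_le ⟨v, ⟨hv, hv0⟩, rfl⟩

lemma dminN_bot {𝔽 V : Type*} [Field 𝔽] [AddCommGroup V] [Module 𝔽 V] (wt : V → ℕ) :
    dminN wt (⊥ : Submodule 𝔽 V) = 0 := by
  simp [dminN, Submodule.mem_bot]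

theorem dminN_hwt_le_singleton {𝔽 ι : Type*} [Field 𝔽] [Fintype ι]
    (D : Submodule 𝔽 (ι → 𝔽)) : dminN hwt D ≤ Fintype.card ι - finrank 𝔽 D + 1 := by
  rcases Nat.eq_zero_or_pos (finrank 𝔽 D) with hD | hD
  · rw [Submodule.finrank_eq_zero.mp hD, dminN_bot]
    exact Nat.zero_le _
  have hDle : finrank 𝔽 D ≤ Fintype.card ι := by simpa using D.finrank_le
  obtain ⟨S, -, hS⟩ := Finset.exists_subset_card_eq
    (show finrank 𝔽 D - 1 ≤ (Finset.univ : Finset ι).card by simp; omega)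
  obtain ⟨v, hv, hv0, hvS⟩ := D.exists_mem_ne_zero_eq_zero_on (S := S) (by omega)
  calc dminN hwt D ≤ hwt v := dminN_le hwt hv hv0
    _ ≤ Fintype.card ι - S.card := hwt_le_card_sub_of_eq_zero_on hvS
    _ = Fintype.card ι - finrank 𝔽 D + 1 := by omega

lemma Nat.sSup_eq_iff_mem_of_forall_le {s : Set ℕ} {m : ℕ} (hm : m ≠ 0)
    (h : ∀ x ∈ s, x ≤ m) : sSup s = m ↔ m ∈ s := by
  refine ⟨fun hs => ?_, fun hms => IsGreatest.csSup_eq ⟨hms, h⟩⟩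
  have hne : s.Nonempty := Set.nonempty_iff_ne_empty.mpr fun he => hm (by simp_all)
  exact hs ▸ Nat.sSup_mem hne ⟨m, h⟩

section alphaN

variable {𝔽 ι : Type*} [Field 𝔽] [Fintype ι]

lemma sSup_dminN_hwt_eq_singleton_iff {i : ℕ} {P : Set (Submodule 𝔽 (ι → 𝔽))}
    (hP : ∀ D ∈ P, finrank 𝔽 D = i) :
    sSup (dminN hwt '' P) = Fintype.card ι - i + 1 ↔
      ∃ D ∈ P, dminN hwt D = Fintype.card ι - i + 1 :=
  Nat.sSup_eq_iff_mem_of_forall_le (Nat.succ_ne_zero _) <| by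
    rintro _ ⟨D, hD, rfl⟩
    exact hP D hD ▸ dminN_hwt_le_singleton D

theorem alphaN_hwt_le_singleton (C : Submodule 𝔽 (ι → 𝔽)) (i : ℕ) :
    alphaN hwt C i ≤ Fintype.card ι - i + 1 := by
  unfold alphaN
  split <;>
  · refine csSup_le' ?_
    rintro _ ⟨D, ⟨-, rfl⟩, rfl⟩
    exact dminN_hwt_le_singleton D

theorem alphaN_hwt_eq_singleton_iff_of_le {C : Submodule 𝔽 (ι → 𝔽)} {i : ℕ}
    (hi : i ≤ finrank 𝔽 C) :
    alphaN hwt C i = Fintype.card ι - i + 1 ↔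
      ∃ D : Submodule 𝔽 (ι → 𝔽), D ≤ C ∧ finrank 𝔽 D = i ∧
        dminN hwt D = Fintype.card ι - i + 1 := by
  rw [alphaN, if_pos hi, sSup_dminN_hwt_eq_singleton_iff fun D hD => hD.2]
  simp only [Set.mem_ofPred_eq, and_assoc]

theorem alphaN_hwt_eq_singleton_iff_of_lt {C : Submodule 𝔽 (ι → 𝔽)} {i : ℕ}
    (hi : finrank 𝔽 C < i) :
    alphaN hwt C i = Fintype.card ι - i + 1 ↔
      ∃ D : Submodule 𝔽 (ι → 𝔽), C ≤ D ∧ finrank 𝔽 D = i ∧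
        dminN hwt D = Fintype.card ι - i + 1 := by
  rw [alphaN, if_neg hi.not_ge, sSup_dminN_hwt_eq_singleton_iff fun D hD => hD.2]
  simp only [Set.mem_ofPred_eq, and_assoc]

theorem alphaN_hwt_finrank_eq_singleton_iff (C : Submodule 𝔽 (ι → 𝔽)) :
    alphaN hwt C (finrank 𝔽 C) = Fintype.card ι - finrank 𝔽 C + 1 ↔
      dminN hwt C = Fintype.card ι - finrank 𝔽 C + 1 := by
  rw [alphaN_hwt_eq_singleton_iff_of_le le_rfl]
  constructor
  · rintro ⟨D, hDC, hD, hdmin⟩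
    rwa [Submodule.eq_of_le_of_finrank_eq hDC hD] at hdmin
  · exact fun hdmin => ⟨C, le_rfl, rfl, hdmin⟩

end alphaN

theorem alpha_le_singleton_and_MDS_characterization_general
    {𝔽 : Type*} [Field 𝔽] {n k : ℕ}
    (C : Submodule 𝔽 (Fin n → 𝔽)) (hk : finrank 𝔽 C = k) :
    (∀ i, 1 ≤ i → i ≤ n → alphaN hwt C i ≤ n - i + 1) ∧
    (∀ i, 1 ≤ i → i ≤ k - 1 →
      (alphaN hwt C i = n - i + 1 ↔
        ∃ D : Submodule 𝔽 (Fin n → 𝔽), D ≤ C ∧ finrank 𝔽 D = i ∧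
          dminN hwt D = n - i + 1)) ∧
    (alphaN hwt C k = n - k + 1 ↔ dminN hwt C = n - k + 1) ∧
    (∀ i, k + 1 ≤ i → i ≤ n →
      (alphaN hwt C i = n - i + 1 ↔
        ∃ D : Submodule 𝔽 (Fin n → 𝔽), C ≤ D ∧ finrank 𝔽 D = i ∧
          dminN hwt D = n - i + 1)) := by
  subst hk
  refine ⟨fun i _ _ => ?_, fun i _ hi => ?_, ?_, fun i hi _ => ?_⟩
  · simpa only [Fintype.card_fin] using alphaN_hwt_le_singleton C i
  · simpa only [Fintype.card_fin] using alphaN_hwt_eq_singleton_iff_of_le (C := C) (by omega)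
  · simpa only [Fintype.card_fin] using alphaN_hwt_finrank_eq_singleton_iff C
  · simpa only [Fintype.card_fin] using alphaN_hwt_eq_singleton_iff_of_lt (C := C) (by omega)

/-- Singleton-type bound for code distances of a `k`-dimensional code `C ⊆ 𝔽_q^n` with the
Hamming metric: `α_i(C) ≤ n - i + 1`, with equality for `i ≤ k-1` iff `C` contains an
`i`-dimensional MDS code, for `i = k` iff `C` is MDS, and for `i ≥ k+1` iff `C` is contained
in an `i`-dimensional MDS code. -/
theorem alpha_le_singleton_and_MDS_characterization
    {𝔽 : Type*} [Field 𝔽] [Fintype 𝔽] {n k : ℕ}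
    (C : Submodule 𝔽 (Fin n → 𝔽)) (hk : finrank 𝔽 C = k) :
    (∀ i, 1 ≤ i → i ≤ n → alphaN hwt C i ≤ n - i + 1) ∧
    (∀ i, 1 ≤ i → i ≤ k - 1 →
      (alphaN hwt C i = n - i + 1 ↔
        ∃ D : Submodule 𝔽 (Fin n → 𝔽), D ≤ C ∧ finrank 𝔽 D = i ∧
          dminN hwt D = n - i + 1)) ∧
    (alphaN hwt C k = n - k + 1 ↔ dminN hwt C = n - k + 1) ∧
    (∀ i, k + 1 ≤ i → i ≤ n →
      (alphaN hwt C i = n - i + 1 ↔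
        ∃ D : Submodule 𝔽 (Fin n → 𝔽), C ≤ D ∧ finrank 𝔽 D = i ∧
          dminN hwt D = n - i + 1)) :=
  alpha_le_singleton_and_MDS_characterization_general C hk
end

section
/- Let C ⊆ V be a k-dimensional code in an N-dimensional metric F_q-vector space, and let 1 ≤ i ≤ N - k. Then α_{k+i}(C) = min{d_min(C), ρ_i(C)}. -/
open Module

/-- Minimum distance (minimum weight of a nonzero element) of a code `D`. -/
noncomputable def dminR {𝔽 V : Type*} [Field 𝔽] [AddCommGroup V] [Module 𝔽 V]
    (wt : V → ℝ) (D : Submodule 𝔽 V) : ℝ :=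
  sInf (wt '' {v : V | v ∈ D ∧ v ≠ 0})

/-- The `i`-th code distance of a code `C`: for `i ≤ dim C` the largest minimum distance of
an `i`-dimensional subcode of `C`, and for `i ≥ dim C` the largest minimum distance of an
`i`-dimensional supercode of `C` (both notions agree at `i = dim C`). -/
noncomputable def alphaR {𝔽 V : Type*} [Field 𝔽] [AddCommGroup V] [Module 𝔽 V]
    (wt : V → ℝ) (C : Submodule 𝔽 V) (i : ℕ) : ℝ :=
  if i ≤ finrank 𝔽 C then
    sSup (dminR wt '' {D : Submodule 𝔽 V | D ≤ C ∧ finrank 𝔽 D = i})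
  else
    sSup (dminR wt '' {D : Submodule 𝔽 V | C ≤ D ∧ finrank 𝔽 D = i})

/-- The distance `d(C,D) = min{wt(x - y) : x ∈ C, y ∈ D, y ≠ 0}` between two codes. -/
noncomputable def distCD {𝔽 V : Type*} [Field 𝔽] [AddCommGroup V] [Module 𝔽 V]
    (wt : V → ℝ) (C D : Submodule 𝔽 V) : ℝ :=
  sInf {r : ℝ | ∃ x ∈ C, ∃ y ∈ D, y ≠ 0 ∧ wt (x - y) = r}

/-- The `i`-th generalized radius `ρ_i(C) = max{d(C,D) : dim D = i}`. -/
noncomputable def genRadius {𝔽 V : Type*} [Field 𝔽] [AddCommGroup V] [Module 𝔽 V]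
    (wt : V → ℝ) (C : Submodule 𝔽 V) (i : ℕ) : ℝ :=
  sSup {r : ℝ | ∃ D : Submodule 𝔽 V, finrank 𝔽 D = i ∧ distCD wt C D = r}

/-- The covering radius `ρ(C) = max{d(C,v) : v ∈ V}`. -/
noncomputable def covRadius {𝔽 V : Type*} [Field 𝔽] [AddCommGroup V] [Module 𝔽 V]
    (wt : V → ℝ) (C : Submodule 𝔽 V) : ℝ :=
  sSup {r : ℝ | ∃ v : V, sInf {s : ℝ | ∃ x ∈ C, wt (x - v) = s} = r}

section aux
variable {𝔽 V : Type*} [Field 𝔽] [AddCommGroup V] [Module 𝔽 V] (wt : V → ℝ)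

lemma dminR_le [Finite V] {D : Submodule 𝔽 V} {v : V} (hv : v ∈ D) (hv0 : v ≠ 0) :
    dminR wt D ≤ wt v :=
  csInf_le ((Set.toFinite _).image wt).bddBelow ⟨v, ⟨hv, hv0⟩, rfl⟩

lemma dminR_mem [Finite V] {D : Submodule 𝔽 V} (hD : D ≠ ⊥) :
    ∃ v ∈ D, v ≠ 0 ∧ wt v = dminR wt D := by
  obtain ⟨v, hv, hv0⟩ := Submodule.exists_mem_ne_zero_of_ne_bot hD
  have hne : (wt '' {v : V | v ∈ D ∧ v ≠ 0}).Nonempty := ⟨wt v, v, ⟨hv, hv0⟩, rfl⟩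
  obtain ⟨w, ⟨hw, hw0⟩, hwe⟩ := hne.csInf_mem ((Set.toFinite _).image wt)
  exact ⟨w, hw, hw0, hwe⟩

lemma le_dminR {D : Submodule 𝔽 V} {a : ℝ} (hD : D ≠ ⊥)
    (h : ∀ v ∈ D, v ≠ 0 → a ≤ wt v) : a ≤ dminR wt D := by
  obtain ⟨v, hv, hv0⟩ := Submodule.exists_mem_ne_zero_of_ne_bot hD
  exact le_csInf ⟨wt v, ⟨v, ⟨hv, hv0⟩, rfl⟩⟩ (by rintro r ⟨w, ⟨hw, hw0⟩, rfl⟩; exact h w hw hw0)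

lemma distCD_finite [Finite V] (C D : Submodule 𝔽 V) :
    {r : ℝ | ∃ x ∈ C, ∃ y ∈ D, y ≠ 0 ∧ wt (x - y) = r}.Finite := by
  apply (Set.finite_range fun p : V × V => wt (p.1 - p.2)).subset
  rintro r ⟨x, _, y, _, _, rfl⟩
  exact ⟨(x, y), rfl⟩

lemma distCD_le [Finite V] {C D : Submodule 𝔽 V} {x y : V} (hx : x ∈ C) (hy : y ∈ D)
    (hy0 : y ≠ 0) : distCD wt C D ≤ wt (x - y) :=
  csInf_le (distCD_finite wt C D).bddBelow ⟨x, hx, y, hy, hy0, rfl⟩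

lemma distCD_mem [Finite V] {C D : Submodule 𝔽 V} (hD : D ≠ ⊥) :
    ∃ x ∈ C, ∃ y ∈ D, y ≠ 0 ∧ wt (x - y) = distCD wt C D := by
  obtain ⟨y, hy, hy0⟩ := Submodule.exists_mem_ne_zero_of_ne_bot hD
  have hne : {r : ℝ | ∃ x ∈ C, ∃ y ∈ D, y ≠ 0 ∧ wt (x - y) = r}.Nonempty :=
    ⟨wt (0 - y), 0, C.zero_mem, y, hy, hy0, rfl⟩
  exact hne.csInf_mem (distCD_finite wt C D)

lemma genRadius_finite [Finite V] (C : Submodule 𝔽 V) (i : ℕ) :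
    {r : ℝ | ∃ D : Submodule 𝔽 V, finrank 𝔽 D = i ∧ distCD wt C D = r}.Finite := by
  haveI : Finite (Submodule 𝔽 V) :=
    Finite.of_injective (fun D : Submodule 𝔽 V => (D : Set V)) SetLike.coe_injective
  apply (Set.finite_range fun D : Submodule 𝔽 V => distCD wt C D).subset
  rintro r ⟨D, _, rfl⟩
  exact ⟨D, rfl⟩

lemma le_genRadius [Finite V] {C D : Submodule 𝔽 V} {i : ℕ} (h : finrank 𝔽 D = i) :
    distCD wt C D ≤ genRadius wt C i :=
  le_csSup (genRadius_finite wt C i).bddAbove ⟨D, h, rfl⟩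

end aux

/-- For a `k`-dimensional code `C` in an `N`-dimensional metric space and `1 ≤ i ≤ N - k`,
the supercode distance satisfies `α_{k+i}(C) = min{d_min(C), ρ_i(C)}`. -/
theorem alpha_eq_min_dmin_genRadius {𝔽 V : Type*} [Field 𝔽] [Fintype 𝔽] [AddCommGroup V]
    [Module 𝔽 V] [FiniteDimensional 𝔽 V] (wt : V → ℝ)
    (hwt0 : ∀ x : V, wt x = 0 ↔ x = 0) (hwtpos : ∀ x : V, 0 ≤ wt x)
    (hwtsymm : ∀ x : V, wt (-x) = wt x) (hwttri : ∀ x y : V, wt (x + y) ≤ wt x + wt y)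
    {N k : ℕ} (hN : finrank 𝔽 V = N) (C : Submodule 𝔽 V) (hC : C ≠ ⊥)
    (hk : finrank 𝔽 C = k) (i : ℕ) (hi1 : 1 ≤ i) (hi2 : i ≤ N - k) :
    alphaR wt C (k + i) = min (dminR wt C) (genRadius wt C i) := by
  haveI : Finite V := Module.finite_of_finite 𝔽
  haveI : Finite (Submodule 𝔽 V) :=
    Finite.of_injective (fun D : Submodule 𝔽 V => (D : Set V)) SetLike.coe_injective
  have hwtpos' : ∀ v : V, v ≠ 0 → 0 < wt v := fun v hv =>
    lt_of_le_of_ne (hwtpos v) fun h => hv ((hwt0 v).mp h.symm)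
  have hdC : 0 < dminR wt C := by
    obtain ⟨v, _, hv0, hve⟩ := dminR_mem wt hC
    rw [← hve]; exact hwtpos' v hv0
  have hrho0 : 0 ≤ genRadius wt C i := by
    apply Real.sSup_nonneg
    rintro r ⟨D, _, rfl⟩
    exact Real.sInf_nonneg (by rintro r ⟨x, _, y, _, _, rfl⟩; exact hwtpos _)
  have halpha : alphaR wt C (k + i) =
      sSup (dminR wt '' {D : Submodule 𝔽 V | C ≤ D ∧ finrank 𝔽 D = k + i}) := by
    rw [alphaR, if_neg]
    rw [hk]; omega
  have hle : alphaR wt C (k + i) ≤ min (dminR wt C) (genRadius wt C i) := by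
    rw [halpha]
    apply Real.sSup_le _ (le_min hdC.le hrho0)
    rintro r ⟨D, ⟨hCD, hD⟩, rfl⟩
    refine le_min ?_ ?_
    · obtain ⟨v, hvC, hv0, hve⟩ := dminR_mem wt hC
      rw [← hve]
      exact dminR_le wt (hCD hvC) hv0
    · -- build a complement of C inside D
      obtain ⟨C'', hcompl⟩ := Submodule.exists_isCompl (C.comap D.subtype)
      have hmapC' : (C.comap D.subtype).map D.subtype = C := by
        rw [Submodule.map_comap_subtype, inf_eq_right.mpr hCD]
      have hfC' : finrank 𝔽 (C.comap D.subtype) = k := by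
        have h1 := (Submodule.equivMapOfInjective D.subtype D.injective_subtype
          (C.comap D.subtype)).finrank_eq
        rw [hmapC', hk] at h1
        exact h1
      have hfC'' : finrank 𝔽 C'' = i := by
        have h1 := Submodule.finrank_add_eq_of_isCompl hcompl
        rw [hfC', hD] at h1
        omega
      have hfD'' : finrank 𝔽 (C''.map D.subtype) = i := by
        have h2 := (Submodule.equivMapOfInjective D.subtype D.injective_subtype C'').finrank_eq
        rw [← h2]
        exact hfC''
      have hD''bot : C''.map D.subtype ≠ ⊥ := by
        intro h; rw [h, finrank_bot] at hfD''; omega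
      have hCD'' : ∀ y ∈ C''.map D.subtype, y ∈ C → y = 0 := by
        rintro y ⟨w, hw, rfl⟩ hyC
        have hw0 : w ∈ C.comap D.subtype ⊓ C'' := ⟨Submodule.mem_comap.mpr hyC, hw⟩
        rw [hcompl.disjoint.eq_bot] at hw0
        rw [(Submodule.mem_bot 𝔽).mp hw0]
        simp
      obtain ⟨x, hx, y, hy, hy0, hxy⟩ := distCD_mem wt (C := C) hD''bot
      have hxyD : x - y ∈ D := D.sub_mem (hCD hx) (Submodule.map_subtype_le D C'' hy)
      have hxy0 : x - y ≠ 0 := by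
        intro h
        exact hy0 (hCD'' y hy (sub_eq_zero.mp h ▸ hx))
      calc dminR wt D ≤ wt (x - y) := dminR_le wt hxyD hxy0
        _ = distCD wt C (C''.map D.subtype) := hxy
        _ ≤ genRadius wt C i := le_genRadius wt hfD''
  have hge : min (dminR wt C) (genRadius wt C i) ≤ alphaR wt C (k + i) := by
    rw [halpha]
    by_cases hpos : 0 < genRadius wt C i
    · have hne : {r : ℝ | ∃ D : Submodule 𝔽 V, finrank 𝔽 D = i ∧ distCD wt C D = r}.Nonempty := by
        by_contra h
        rw [Set.not_nonempty_iff_eq_empty] at h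
        rw [genRadius, h, Real.sSup_empty] at hpos
        exact lt_irrefl 0 hpos
      obtain ⟨D, hDi, hdist⟩ := hne.csSup_mem (genRadius_finite wt C i)
      rw [← genRadius] at hdist
      have hDbot : D ≠ ⊥ := by intro h; rw [h, finrank_bot] at hDi; omega
      have hdisj : ∀ y ∈ D, y ∈ C → y = 0 := by
        intro y hyD hyC
        by_contra hy0
        have h1 := distCD_le wt hyC hyD hy0
        rw [sub_self, (hwt0 0).mpr rfl, hdist] at h1
        linarith
      have hinf : C ⊓ D = ⊥ := by
        rw [eq_bot_iff]
        rintro y ⟨hyC, hyD⟩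
        exact (Submodule.mem_bot 𝔽).mpr (hdisj y hyD hyC)
      have hfE : finrank 𝔽 (C ⊔ D : Submodule 𝔽 V) = k + i := by
        have h1 := Submodule.finrank_sup_add_finrank_inf_eq C D
        rw [hinf, finrank_bot, hk, hDi] at h1
        omega
      have hEbot : C ⊔ D ≠ ⊥ := by intro h; rw [h, finrank_bot] at hfE; omega
      have hmem : dminR wt (C ⊔ D) ∈
          dminR wt '' {E : Submodule 𝔽 V | C ≤ E ∧ finrank 𝔽 E = k + i} :=
        ⟨C ⊔ D, ⟨le_sup_left, hfE⟩, rfl⟩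
      refine le_trans ?_ (le_csSup ((Set.toFinite _).image _).bddAbove hmem)
      apply le_dminR wt hEbot
      intro v hv hv0
      obtain ⟨x, hx, y, hy, rfl⟩ := Submodule.mem_sup.mp hv
      by_cases hy0 : y = 0
      · subst hy0
        rw [add_zero] at hv0 ⊢
        exact (min_le_left _ _).trans (dminR_le wt hx hv0)
      · refine (min_le_right _ _).trans ?_
        rw [← hdist, ← sub_neg_eq_add]
        exact distCD_le wt hx (D.neg_mem hy) (neg_ne_zero.mpr hy0)
    · refine le_trans (le_trans (min_le_right _ _) (not_lt.mp hpos)) (Real.sSup_nonneg ?_)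
      rintro r ⟨D, _, rfl⟩
      exact Real.sInf_nonneg (by rintro r ⟨v, _, rfl⟩; exact hwtpos v)
  exact le_antisymm hle hge
end

section
/- Let C ⊆ F_q^n be a nonzero linear code of dimension k with the Hamming metric. Then {α_1(C), ..., α_k(C)} ⊆ SLD(C), and α_1(C) = max SLD(C), α_k(C) = min SLD(C). -/
open Module

/-- The dual code of `C` with respect to the standard inner product. -/
def dualCode {𝔽 : Type*} [Field 𝔽] {n : ℕ} (C : Submodule 𝔽 (Fin n → 𝔽)) :
    Submodule 𝔽 (Fin n → 𝔽) where
  carrier := {x | ∀ c ∈ C, ∑ i, c i * x i = 0}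
  add_mem' := by
    intro a b ha hb c hc
    simp [mul_add, Finset.sum_add_distrib, ha c hc, hb c hc]
  zero_mem' := by intro c hc; simp
  smul_mem' := by
    intro r a ha c hc
    simp only [Pi.smul_apply, smul_eq_mul, mul_left_comm, ← Finset.mul_sum, ha c hc, mul_zero]

/-- The set of numbers `s` such that some `s` columns of the matrix `H` are strongly
linearly dependent (a vanishing combination with all coefficients nonzero exists). -/
def SLDset {𝔽 : Type*} [Field 𝔽] {m n : ℕ} (H : Matrix (Fin m) (Fin n) 𝔽) : Set ℕ :=
  {s : ℕ | ∃ fs : Finset (Fin n), fs.card = s ∧ fs.Nonempty ∧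
    ∃ c : Fin n → 𝔽, (∀ j ∈ fs, c j ≠ 0) ∧ ∑ j ∈ fs, c j • (fun r => H r j) = 0}

/-! The parity-check condition identifies `SLD(C)` with the set `W` of weights of nonzero
codewords of `C`. The minimum distance of a nonzero subcode is attained by one of its codewords,
so it lies in `W`; hence each `αᵢ`, a maximum of such distances, lies in the finite set `W`.
A line spanned by a codeword of maximal weight has that weight as its distance, so `α₁ = max W`,
and the only `k`-dimensional subcode is `C` itself, so `α_k = d(C) = min W`. -/

section Weights

variable {𝔽 V : Type*} [Field 𝔽] [AddCommGroup V] [Module 𝔽 V] {wt : V → ℕ}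

def nonzeroWeights (wt : V → ℕ) (D : Submodule 𝔽 V) : Set ℕ :=
  wt '' {v | v ∈ D ∧ v ≠ 0}

lemma nonzeroWeights_mono {D C : Submodule 𝔽 V} (h : D ≤ C) :
    nonzeroWeights wt D ⊆ nonzeroWeights wt C :=
  Set.image_mono fun _ ⟨hv, hv0⟩ => ⟨h hv, hv0⟩

lemma nonzeroWeights_nonempty {D : Submodule 𝔽 V} (hD : D ≠ ⊥) :
    (nonzeroWeights wt D).Nonempty :=
  let ⟨v, hv, hv0⟩ := Submodule.exists_mem_ne_zero_of_ne_bot hD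
  ⟨wt v, v, ⟨hv, hv0⟩, rfl⟩

lemma dminN_mem_nonzeroWeights {D : Submodule 𝔽 V} (hD : D ≠ ⊥) :
    dminN wt D ∈ nonzeroWeights wt D :=
  Nat.sInf_mem (nonzeroWeights_nonempty hD)

lemma dminN_span_singleton (hwt : ∀ a : 𝔽, a ≠ 0 → ∀ v, wt (a • v) = wt v) {v : V}
    (hv : v ≠ 0) : dminN wt (𝔽 ∙ v) = wt v := by
  suffices nonzeroWeights wt (𝔽 ∙ v) = {wt v} from
    (congrArg sInf this).trans (csInf_singleton _)
  refine Set.eq_singleton_iff_unique_mem.mpr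
    ⟨⟨v, ⟨Submodule.mem_span_singleton_self v, hv⟩, rfl⟩, ?_⟩
  rintro _ ⟨w, ⟨hw, hw0⟩, rfl⟩
  obtain ⟨a, rfl⟩ := Submodule.mem_span_singleton.mp hw
  exact hwt a (by rintro rfl; simp at hw0) v

lemma Submodule.exists_le_finrank_eq (C : Submodule 𝔽 V) {i : ℕ} (hi : i ≤ finrank 𝔽 C) :
    ∃ D ≤ C, finrank 𝔽 D = i := by
  obtain ⟨f, hf⟩ := exists_linearIndependent_of_le_finrank hi
  refine ⟨(Submodule.span 𝔽 (Set.range f)).map C.subtype, Submodule.map_subtype_le _ _, ?_⟩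
  rw [Submodule.finrank_map_subtype_eq, finrank_span_eq_card hf, Fintype.card_fin]

lemma dminN_image_subcodes_subset {C : Submodule 𝔽 V} {i : ℕ} (hi : 1 ≤ i) :
    dminN wt '' {D | D ≤ C ∧ finrank 𝔽 D = i} ⊆ nonzeroWeights wt C := by
  rintro _ ⟨D, ⟨hDC, hDi⟩, rfl⟩
  have hD : D ≠ ⊥ := by
    rintro rfl
    rw [finrank_bot] at hDi
    omega
  exact nonzeroWeights_mono hDC (dminN_mem_nonzeroWeights hD)

lemma alphaN_mem_nonzeroWeights {C : Submodule 𝔽 V} (hbdd : BddAbove (nonzeroWeights wt C))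
    {i : ℕ} (hi₁ : 1 ≤ i) (hi : i ≤ finrank 𝔽 C) : alphaN wt C i ∈ nonzeroWeights wt C := by
  rw [alphaN, if_pos hi]
  obtain ⟨D, hDC, hDi⟩ := C.exists_le_finrank_eq hi
  have hsub := dminN_image_subcodes_subset (wt := wt) (C := C) hi₁
  exact hsub (Nat.sSup_mem ⟨_, D, ⟨hDC, hDi⟩, rfl⟩ (hbdd.mono hsub))

lemma alphaN_one (hwt : ∀ a : 𝔽, a ≠ 0 → ∀ v, wt (a • v) = wt v) {C : Submodule 𝔽 V}
    [FiniteDimensional 𝔽 C] (hC : C ≠ ⊥) (hbdd : BddAbove (nonzeroWeights wt C)) :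
    alphaN wt C 1 = sSup (nonzeroWeights wt C) := by
  have h1 : 1 ≤ finrank 𝔽 C := Submodule.one_le_finrank_iff.mpr hC
  refine le_antisymm (le_csSup hbdd (alphaN_mem_nonzeroWeights hbdd le_rfl h1)) ?_
  obtain ⟨v, ⟨hvC, hv0⟩, hv⟩ := Nat.sSup_mem (nonzeroWeights_nonempty hC) hbdd
  rw [alphaN, if_pos h1, ← hv, ← dminN_span_singleton hwt hv0]
  refine le_csSup (hbdd.mono (dminN_image_subcodes_subset le_rfl)) ⟨_, ⟨?_, ?_⟩, rfl⟩
  · exact (Submodule.span_singleton_le_iff_mem v C).mpr hvC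
  · exact finrank_span_singleton hv0

lemma alphaN_finrank (C : Submodule 𝔽 V) [FiniteDimensional 𝔽 C] :
    alphaN wt C (finrank 𝔽 C) = dminN wt C := by
  have hC : {D : Submodule 𝔽 V | D ≤ C ∧ finrank 𝔽 D = finrank 𝔽 C} = {C} := by
    ext D
    refine ⟨fun ⟨hDC, hD⟩ => Submodule.eq_of_le_of_finrank_le hDC hD.ge, ?_⟩
    rintro rfl
    exact ⟨le_rfl, rfl⟩
  rw [alphaN, if_pos le_rfl, hC, Set.image_singleton, csSup_singleton]

end Weights

lemma hwt_smul {ι K M : Type*} [DivisionRing K] [AddCommGroup M] [Module K M]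
    {a : K} (ha : a ≠ 0) (x : ι → M) : hwt (a • x) = hwt x := by
  simp [hwt, ha]

lemma hwt_eq_hammingNorm {ι α : Type*} [Fintype ι] [Zero α] [DecidableEq α] (x : ι → α) :
    hwt x = hammingNorm x := by
  rw [hwt, hammingNorm, ← Set.ncard_coe_finset]
  simp

lemma hwt_le_card {ι α : Type*} [Finite ι] [Zero α] (x : ι → α) : hwt x ≤ Nat.card ι :=
  Set.ncard_le_card _

lemma bddAbove_nonzeroWeights_hwt {ι 𝔽 : Type*} [Finite ι] [Field 𝔽]
    (C : Submodule 𝔽 (ι → 𝔽)) : BddAbove (nonzeroWeights hwt C) :=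
  ⟨Nat.card ι, by rintro _ ⟨v, _, rfl⟩; exact hwt_le_card v⟩

section ParityCheck

open Matrix

variable {𝔽 : Type*} [Field 𝔽] {n m : ℕ}

lemma dualCode_eq_orthogonal (C : Submodule 𝔽 (Fin n → 𝔽)) :
    dualCode C = (1 : Matrix (Fin n) (Fin n) 𝔽).toBilin'.orthogonal C := by
  ext x
  simp [dualCode, LinearMap.BilinForm.mem_orthogonal_iff, toBilin'_apply', dotProduct]

lemma dualCode_dualCode (C : Submodule 𝔽 (Fin n → 𝔽)) : dualCode (dualCode C) = C := by
  rw [dualCode_eq_orthogonal, dualCode_eq_orthogonal]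
  exact LinearMap.BilinForm.orthogonal_orthogonal
    (nondegenerate_of_det_ne_zero (by simp)).toBilin'
    (isSymm_toBilin'_iff_isSymm.mpr isSymm_one).isRefl C

lemma mem_dualCode_span_iff (S : Set (Fin n → 𝔽)) (x : Fin n → 𝔽) :
    x ∈ dualCode (Submodule.span 𝔽 S) ↔ ∀ c ∈ S, c ⬝ᵥ x = 0 := by
  have h : x ∈ dualCode (Submodule.span 𝔽 S) ↔
      Submodule.span 𝔽 S ≤ LinearMap.ker (dotProductEquiv 𝔽 (Fin n) x) := by
    simp [dualCode, SetLike.le_def, dotProduct, mul_comm]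
  rw [h, Submodule.span_le]
  simp [Set.subset_def, dotProduct_comm]

lemma mem_iff_mulVec_eq_zero {C : Submodule 𝔽 (Fin n → 𝔽)} {H : Matrix (Fin m) (Fin n) 𝔽}
    (hH : Submodule.span 𝔽 (Set.range fun r => H r) = dualCode C) (x : Fin n → 𝔽) :
    x ∈ C ↔ H *ᵥ x = 0 := by
  rw [← dualCode_dualCode C, ← hH, mem_dualCode_span_iff, Set.forall_mem_range, funext_iff]
  rfl

lemma mulVec_eq_sum_of_support_subset (H : Matrix (Fin m) (Fin n) 𝔽) {v : Fin n → 𝔽}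
    {s : Finset (Fin n)} (hv : ∀ j ∉ s, v j = 0) :
    H *ᵥ v = ∑ j ∈ s, v j • (fun r => H r j) := by
  ext r
  rw [Finset.sum_apply, mulVec, dotProduct, ← Finset.sum_subset s.subset_univ]
  · simp [mul_comm]
  · intro j _ hj
    simp [hv j hj]

lemma SLDset_eq_image (H : Matrix (Fin m) (Fin n) 𝔽) :
    SLDset H = hwt '' {v | H *ᵥ v = 0 ∧ v ≠ 0} := by
  classical
  ext s
  constructor
  · rintro ⟨fs, rfl, ⟨j, hj⟩, c, hc, hsum⟩
    set v : Fin n → 𝔽 := fun j => if j ∈ fs then c j else 0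
    have hv : ∀ j ∉ fs, v j = 0 := fun j hj => if_neg hj
    refine ⟨v, ⟨?_, fun h => hc j hj (by simpa [v, hj] using congrFun h j)⟩, ?_⟩
    · rw [mulVec_eq_sum_of_support_subset H hv, ← hsum]
      exact Finset.sum_congr rfl fun j hj => by simp [v, hj]
    · rw [hwt_eq_hammingNorm, hammingNorm]
      congr 1
      ext j
      by_cases hj : j ∈ fs <;> simp [v, hj, hc]
  · rintro ⟨v, ⟨hHv, hv0⟩, rfl⟩
    set fs : Finset (Fin n) := {j | v j ≠ 0}
    have hv : ∀ j ∉ fs, v j = 0 := fun j hj => by simpa [fs] using hj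
    refine ⟨fs, (hwt_eq_hammingNorm v).symm, ?_, v, fun j hj => by simpa [fs] using hj, ?_⟩
    · obtain ⟨j, hj⟩ := Function.ne_iff.mp hv0
      exact ⟨j, by simpa [fs] using hj⟩
    · rw [← hHv, mulVec_eq_sum_of_support_subset H hv]

lemma SLDset_eq_nonzeroWeights {C : Submodule 𝔽 (Fin n → 𝔽)} {H : Matrix (Fin m) (Fin n) 𝔽}
    (hH : Submodule.span 𝔽 (Set.range fun r => H r) = dualCode C) :
    SLDset H = nonzeroWeights hwt C := by
  simp only [SLDset_eq_image, nonzeroWeights, mem_iff_mulVec_eq_zero hH]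

end ParityCheck

theorem alpha_mem_SLD_general {𝔽 : Type*} [Field 𝔽] {n m k : ℕ}
    (C : Submodule 𝔽 (Fin n → 𝔽)) (hC : C ≠ ⊥) (hk : finrank 𝔽 C = k)
    (H : Matrix (Fin m) (Fin n) 𝔽)
    (hH : Submodule.span 𝔽 (Set.range fun r => H r) = dualCode C) :
    (∀ i, 1 ≤ i → i ≤ k → alphaN hwt C i ∈ SLDset H) ∧
    alphaN hwt C 1 = sSup (SLDset H) ∧
    alphaN hwt C k = sInf (SLDset H) := by
  have hbdd := bddAbove_nonzeroWeights_hwt C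
  subst hk
  rw [SLDset_eq_nonzeroWeights hH]
  exact ⟨fun i hi₁ hi => alphaN_mem_nonzeroWeights hbdd hi₁ hi,
    alphaN_one (fun _ ha v => hwt_smul ha v) hC hbdd, alphaN_finrank C⟩

/-- For a nonzero `k`-dimensional code `C ⊆ 𝔽_q^n` with parity check matrix `H`:
`{α₁(C), …, α_k(C)} ⊆ SLD(C)`, with `α₁(C) = max SLD(C)` and `α_k(C) = min SLD(C)`. -/
theorem alpha_mem_SLD {𝔽 : Type*} [Field 𝔽] [Fintype 𝔽] {n m k : ℕ}
    (C : Submodule 𝔽 (Fin n → 𝔽)) (hC : C ≠ ⊥) (hk : finrank 𝔽 C = k)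
    (H : Matrix (Fin m) (Fin n) 𝔽)
    (hH : Submodule.span 𝔽 (Set.range fun r => H r) = dualCode C) :
    (∀ i, 1 ≤ i → i ≤ k → alphaN hwt C i ∈ SLDset H) ∧
    alphaN hwt C 1 = sSup (SLDset H) ∧
    alphaN hwt C k = sInf (SLDset H) :=
  alpha_mem_SLD_general C hC hk H hH
end

section
/- Let C ⊆ F_q^n be a k-dimensional MDS code with the Hamming metric. Then there exists t ≥ 1 such that α_i^t(C) = n - i + 1 for all 1 ≤ i ≤ k; that is, over a suitable extension field F_{q^t}, the extended code C ⊗ F_{q^t} contains a full chain of MDS subcodes of every dimension i ≤ k. -/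
open Module

/-!
Over a field `K` with more than `2 ^ n` elements, every MDS code `D ⊆ K^n` of dimension `m ≥ 1`
contains an MDS code of dimension `m - 1`. A nonzero word of `D` of weight at most `n - m + 1`
vanishes on some set `S` of `m - 1` coordinates, and the MDS property forces the words of `D`
vanishing on `S` to form a line `L_S`. There are at most `2 ^ n` such sets `S`, and a vector space
over `K` is not a union of fewer than `|K|` proper subspaces, so some linear form `f` on `D` is
nonzero on every line `L_S`; then `ker f` is MDS. Iterating gives MDS subcodes of every dimension.

Extending scalars from `F` to `K` with `[K : F] = n + 1` makes `K` large enough and keeps `C`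
MDS: the dimension is unchanged, and for a word `x` of `C ⊗ K` and an `F`-linear form `φ` on `K`,
the word `φ ∘ x` lies in `C` and its support is contained in that of `x`.
-/

open Finset

lemma Module.Dual.exists_forall_notMem_dualAnnihilator {K V κ : Type*} [Field K] [AddCommGroup V]
    [Module K V] [Fintype κ] (p : κ → Submodule K V) (hp : ∀ i, p i ≠ ⊥)
    (hcard : Fintype.card κ < ENat.card K) : ∃ f : Dual K V, ∀ i, f ∉ (p i).dualAnnihilator := by
  have := Submodule.iUnion_ssubset_of_forall_ne_top_of_card_lt univ
    (fun i => (p i).dualAnnihilator) (by simpa using hp) (by simpa using hcard)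
  simpa [Set.ssubset_univ_iff, Set.iUnion_eq_univ_iff] using this

section MinimumDistance

variable {𝔽 V : Type*} [Field 𝔽] [AddCommGroup V] [Module 𝔽 V] {wt : V → ℕ} {D : Submodule 𝔽 V}

lemma dminN_le_s17 {x : V} (hx : x ∈ D) (hx0 : x ≠ 0) : dminN wt D ≤ wt x :=
  Nat.sInf_le ⟨x, ⟨hx, hx0⟩, rfl⟩

lemma le_dminN {d : ℕ} (hD : D ≠ ⊥) (h : ∀ x ∈ D, x ≠ 0 → d ≤ wt x) : d ≤ dminN wt D := by
  obtain ⟨x, hx, hx0⟩ := Submodule.exists_mem_ne_zero_of_ne_bot hD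
  refine le_csInf ⟨wt x, x, ⟨hx, hx0⟩, rfl⟩ ?_
  rintro _ ⟨y, ⟨hy, hy0⟩, rfl⟩
  exact h y hy hy0

end MinimumDistance

section Hamming

variable {K ι : Type*} [Field K]

def vanishingOn (D : Submodule K (ι → K)) (S : Finset ι) : Submodule K D :=
  LinearMap.ker (LinearMap.funLeft K K ((↑) : S → ι) ∘ₗ D.subtype)

lemma mem_vanishingOn {D : Submodule K (ι → K)} {S : Finset ι} {u : D} :
    u ∈ vanishingOn D S ↔ ∀ j ∈ S, (u : ι → K) j = 0 := by
  simp [vanishingOn, funext_iff, LinearMap.funLeft]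

variable [Fintype ι] {D : Submodule K (ι → K)}

lemma hwt_add_card_le {x : ι → K} (S : Finset ι) (hS : ∀ j ∈ S, x j = 0) :
    hwt x + #S ≤ Fintype.card ι := by
  have hsupp : {j | x j ≠ 0} ⊆ (↑S)ᶜ := fun j hj hjS => hj (hS j hjS)
  have := Set.ncard_le_ncard hsupp
  have := Set.ncard_add_ncard_compl (S : Set ι)
  rw [Set.ncard_coe_finset, Nat.card_eq_fintype_card] at this
  unfold hwt
  omega

lemma exists_card_eq_forall_eq_zero {x : ι → K} {s : ℕ} (h : hwt x + s ≤ Fintype.card ι) :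
    ∃ S : Finset ι, #S = s ∧ ∀ j ∈ S, x j = 0 := by
  classical
  have hcard : hwt x + #{j | x j = 0} = Fintype.card ι := by
    rw [hwt, Set.ncard_eq_toFinset_card', Set.toFinset_ofPred, add_comm]
    simpa using card_filter_add_card_filter_not (s := univ) (fun j => x j = 0)
  obtain ⟨S, hS, hSs⟩ := exists_subset_card_eq (s := {j | x j = 0}) (n := s) (by omega)
  exact ⟨S, hSs, fun j hj => (mem_filter.mp (hS hj)).2⟩

lemma finrank_le_card : finrank K D ≤ Fintype.card ι :=
  (Submodule.finrank_le D).trans_eq (Module.finrank_fintype_fun_eq_card K)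

lemma exists_card_add_one_eq_finrank (hD : D ≠ ⊥) : ∃ S : Finset ι, #S + 1 = finrank K D := by
  have := Submodule.one_le_finrank_iff.mpr hD
  obtain ⟨S, -, hS⟩ := exists_subset_card_eq (s := (univ : Finset ι)) (n := finrank K D - 1)
    (by rw [card_univ]; have := finrank_le_card (D := D); omega)
  exact ⟨S, by omega⟩

lemma vanishingOn_ne_bot {S : Finset ι} (hS : #S < finrank K D) : vanishingOn D S ≠ ⊥ := by
  intro h
  have hrank := LinearMap.finrank_range_add_finrank_ker
    (LinearMap.funLeft K K ((↑) : S → ι) ∘ₗ D.subtype)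
  have hrange := Submodule.finrank_le
    (LinearMap.range (LinearMap.funLeft K K ((↑) : S → ι) ∘ₗ D.subtype))
  rw [← vanishingOn, h, finrank_bot] at hrank
  rw [Module.finrank_fintype_fun_eq_card, Fintype.card_coe] at hrange
  omega

lemma dminN_hwt_add_finrank_le (hD : D ≠ ⊥) : dminN hwt D + finrank K D ≤ Fintype.card ι + 1 := by
  obtain ⟨S, hS⟩ := exists_card_add_one_eq_finrank hD
  obtain ⟨u, hu, hu0⟩ :=
    Submodule.exists_mem_ne_zero_of_ne_bot (vanishingOn_ne_bot (D := D) (S := S) (by omega))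
  have := dminN_le_s17 (wt := hwt) u.2 (Submodule.coe_eq_zero.not.mpr hu0)
  have := hwt_add_card_le S (mem_vanishingOn.mp hu)
  omega

end Hamming

section MDS

variable {K ι : Type*} [Field K] [Fintype ι] {D : Submodule K (ι → K)}

/-- Equality in the Singleton bound `dminN hwt D + dim D ≤ n + 1`, stated for every nonzero word
so that it involves no truncated subtraction. -/
def IsMDS (D : Submodule K (ι → K)) : Prop :=
  ∀ x ∈ D, x ≠ 0 → Fintype.card ι + 1 ≤ hwt x + finrank K D

lemma isMDS_of_dminN_eq (h : dminN hwt D = Fintype.card ι - finrank K D + 1) : IsMDS D := by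
  intro x hx hx0
  have := dminN_le_s17 (wt := hwt) hx hx0
  have := finrank_le_card (D := D)
  omega

lemma IsMDS.dminN_add_finrank (hD : IsMDS D) (h0 : D ≠ ⊥) :
    dminN hwt D + finrank K D = Fintype.card ι + 1 := by
  have hsingleton := dminN_hwt_add_finrank_le h0
  have := le_dminN (wt := hwt) (d := Fintype.card ι + 1 - finrank K D) h0
    (fun x hx hx0 => by have := hD x hx hx0; omega)
  omega

lemma IsMDS.exists_smul_eq_of_mem_vanishingOn (hD : IsMDS D) {S : Finset ι}
    (hS : finrank K D ≤ #S + 1) {u w : D} (hu : u ∈ vanishingOn D S) (hw : w ∈ vanishingOn D S)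
    (hu0 : u ≠ 0) : ∃ c : K, w = c • u := by
  classical
  rw [mem_vanishingOn] at hu hw
  obtain ⟨j, hj⟩ := Function.ne_iff.mp (Submodule.coe_eq_zero.not.mpr hu0)
  have hjS : j ∉ S := fun h => hj (hu j h)
  set z : D := (u : ι → K) j • w - (w : ι → K) j • u
  have hz : ∀ i ∈ insert j S, (z : ι → K) i = 0 := by
    intro i hi
    rcases mem_insert.mp hi with rfl | hi
    · simp [z, mul_comm]
    · simp [z, hu i hi, hw i hi]
  have hz0 : z = 0 := by
    by_contra hz0
    have hlow := hD z z.2 (Submodule.coe_eq_zero.not.mpr hz0)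
    have hup := hwt_add_card_le _ hz
    rw [card_insert_of_notMem hjS] at hup
    omega
  refine ⟨((u : ι → K) j)⁻¹ * (w : ι → K) j, ?_⟩
  rw [mul_smul, ← sub_eq_zero.mp hz0, smul_smul, inv_mul_cancel₀ hj, one_smul]

lemma IsMDS.isMDS_map_ker (hD : IsMDS D) {f : Module.Dual K D} (hf0 : f ≠ 0)
    (hf : ∀ S : Finset ι, #S + 1 = finrank K D → f ∉ (vanishingOn D S).dualAnnihilator) :
    IsMDS ((LinearMap.ker f).map D.subtype) := by
  rintro _ ⟨u, hu, rfl⟩ hu0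
  rw [Submodule.subtype_apply] at hu0 ⊢
  rw [Submodule.finrank_map_subtype_eq]
  by_contra! hlt
  have hker := f.finrank_ker_add_one_of_ne_zero hf0
  obtain ⟨S, hS, hSu⟩ := exists_card_eq_forall_eq_zero (x := (u : ι → K))
    (s := finrank K D - 1) (by omega)
  obtain ⟨w, hw, hfw⟩ : ∃ w ∈ vanishingOn D S, f w ≠ 0 := by
    simpa [Submodule.mem_dualAnnihilator] using hf S (by omega)
  obtain ⟨c, rfl⟩ := hD.exists_smul_eq_of_mem_vanishingOn (by omega) (mem_vanishingOn.mpr hSu)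
    hw (Submodule.coe_eq_zero.not.mp hu0)
  simp [LinearMap.mem_ker.mp hu] at hfw

end MDS

section Descent

variable {K ι : Type*} [Field K] [Finite K] [Fintype ι] {D : Submodule K (ι → K)}

theorem IsMDS.exists_isMDS_finrank_add_one_eq (hK : 2 ^ Fintype.card ι < Nat.card K)
    (hD : IsMDS D) (h0 : D ≠ ⊥) :
    ∃ E ≤ D, finrank K E + 1 = finrank K D ∧ IsMDS E := by
  have hcard : Fintype.card {S : Finset ι // #S + 1 = finrank K D} < ENat.card K := by
    have := Fintype.card_subtype_le (fun S : Finset ι => #S + 1 = finrank K D)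
    rw [Fintype.card_finset] at this
    rw [ENat.card_eq_coe_natCard]
    exact_mod_cast this.trans_lt hK
  obtain ⟨f, hf⟩ := Module.Dual.exists_forall_notMem_dualAnnihilator
    (fun S : {S : Finset ι // #S + 1 = finrank K D} => vanishingOn D S.1)
    (fun S => vanishingOn_ne_bot (by have := S.2; omega)) hcard
  have hf0 : f ≠ 0 := by
    obtain ⟨S, hS⟩ := exists_card_add_one_eq_finrank h0
    rintro rfl
    exact hf ⟨S, hS⟩ (Submodule.zero_mem _)
  refine ⟨(LinearMap.ker f).map D.subtype, Submodule.map_subtype_le _ _, ?_,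
    hD.isMDS_map_ker hf0 fun S hS => hf ⟨S, hS⟩⟩
  rw [Submodule.finrank_map_subtype_eq]
  exact f.finrank_ker_add_one_of_ne_zero hf0

theorem IsMDS.exists_isMDS_finrank_eq (hK : 2 ^ Fintype.card ι < Nat.card K) (hD : IsMDS D)
    {i : ℕ} (hi : i ≤ finrank K D) : ∃ E ≤ D, finrank K E = i ∧ IsMDS E := by
  obtain ⟨d, hd⟩ := Nat.exists_eq_add_of_le hi
  induction d generalizing D with
  | zero => exact ⟨D, le_rfl, hd, hD⟩
  | succ d ih =>
    obtain ⟨E, hED, hE, hEmds⟩ :=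
      hD.exists_isMDS_finrank_add_one_eq hK (Submodule.one_le_finrank_iff.mp (by omega))
    obtain ⟨F, hFE, hF, hFmds⟩ := ih hEmds (by omega) (by omega)
    exact ⟨F, hFE.trans hED, hF, hFmds⟩

theorem IsMDS.alphaN_eq (hK : 2 ^ Fintype.card ι < Nat.card K) (hD : IsMDS D) {i : ℕ}
    (hi1 : 1 ≤ i) (hi : i ≤ finrank K D) : alphaN hwt D i = Fintype.card ι - i + 1 := by
  have := finrank_le_card (D := D)
  rw [alphaN, if_pos hi]
  refine IsGreatest.csSup_eq ⟨?_, ?_⟩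
  · obtain ⟨E, hED, hE, hEmds⟩ := hD.exists_isMDS_finrank_eq hK hi
    have hE0 : E ≠ ⊥ := Submodule.one_le_finrank_iff.mp (by omega)
    have := hEmds.dminN_add_finrank hE0
    exact ⟨E, ⟨hED, hE⟩, by omega⟩
  · rintro _ ⟨E, ⟨-, hE⟩, rfl⟩
    have := dminN_hwt_add_finrank_le (Submodule.one_le_finrank_iff.mp (hE ▸ hi1))
    omega

end Descent

section BaseChange

variable {F K ι : Type*} [Field F] [Field K] [Algebra F K] {C : Submodule F (ι → F)}

variable (K) in
/-- `C ⊗_F K`, realised as the `K`-span of `C` inside `ι → K`. -/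
def codeBaseChange (C : Submodule F (ι → F)) : Submodule K (ι → K) :=
  Submodule.span K {x | ∃ v ∈ C, ∀ j, x j = algebraMap F K (v j)}

lemma comp_mem_of_mem_codeBaseChange {x : ι → K} (hx : x ∈ codeBaseChange K C)
    (φ : K →ₗ[F] F) : φ ∘ x ∈ C := by
  induction hx using Submodule.span_induction generalizing φ with
  | mem x hx =>
    obtain ⟨v, hv, hx⟩ := hx
    have : φ ∘ x = φ 1 • v := by
      ext j
      simp [hx, Algebra.algebraMap_eq_smul_one, mul_comm]
    exact this ▸ C.smul_mem _ hv
  | zero => simp [C.zero_mem]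
  | add x y _ _ hx hy =>
    have : φ ∘ (x + y) = φ ∘ x + φ ∘ y := by ext; simp
    exact this ▸ C.add_mem (hx φ) (hy φ)
  | smul c x _ hx =>
    have : φ ∘ (c • x) = (φ ∘ₗ LinearMap.mulLeft F c) ∘ x := by ext; simp
    rw [this]
    exact hx _

lemma exists_hwt_le_of_mem_codeBaseChange [Finite ι] {x : ι → K} (hx : x ∈ codeBaseChange K C)
    (hx0 : x ≠ 0) : ∃ v ∈ C, v ≠ 0 ∧ hwt v ≤ hwt x := by
  obtain ⟨j, hj⟩ := Function.ne_iff.mp hx0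
  obtain ⟨φ, hφ⟩ := Module.Projective.exists_dual_ne_zero F hj
  refine ⟨φ ∘ x, comp_mem_of_mem_codeBaseChange hx φ, Function.ne_iff.mpr ⟨j, hφ⟩, ?_⟩
  exact Set.ncard_le_ncard (fun i hi h => hi (by simp [h])) (Set.toFinite _)

lemma finrank_codeBaseChange [Finite ι] (C : Submodule F (ι → F)) :
    finrank K (codeBaseChange K C) = finrank F C := by
  let b := Module.finBasis F C
  let w : Fin (finrank F C) → ι → K := fun j => algebraMap F K ∘ (b j : ι → F)
  have hw : LinearIndependent K w := linearIndependent_algebraMap_comp_iff.mpr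
    (b.linearIndependent.map' C.subtype (Submodule.ker_subtype C))
  have hspan : codeBaseChange K C = Submodule.span K (Set.range w) := by
    refine le_antisymm (Submodule.span_le.mpr ?_)
      (Submodule.span_le.mpr (Set.range_subset_iff.mpr fun j => ?_))
    · rintro x ⟨v, hv, hx⟩
      set c := b.repr ⟨v, hv⟩
      have hv' : v = ∑ j, c j • (b j : ι → F) := by
        have := congrArg Subtype.val (b.sum_repr ⟨v, hv⟩)
        simp only [Submodule.coe_sum, Submodule.coe_smul] at this
        exact this.symm
      have : x = ∑ j, algebraMap F K (c j) • w j := by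
        ext i
        rw [hx, hv']
        simp [w, Finset.sum_apply, Algebra.smul_def]
      rw [this]
      exact Submodule.sum_mem _ fun j _ => Submodule.smul_mem _ _ (Submodule.subset_span ⟨j, rfl⟩)
    · exact Submodule.subset_span ⟨b j, (b j).2, fun _ => rfl⟩
  rw [hspan, finrank_span_eq_card hw, Fintype.card_fin]

lemma IsMDS.codeBaseChange [Fintype ι] (hC : IsMDS C) : IsMDS (codeBaseChange K C) := by
  intro x hx hx0
  obtain ⟨v, hv, hv0, hle⟩ := exists_hwt_le_of_mem_codeBaseChange hx hx0
  have := hC v hv hv0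
  rw [finrank_codeBaseChange]
  omega

end BaseChange

theorem exists_extension_with_MDS_chain_general {𝔽 : Type} [Field 𝔽] [Fintype 𝔽] {n k : ℕ}
    (C : Submodule 𝔽 (Fin n → 𝔽)) (hk : finrank 𝔽 C = k)
    (hMDS : dminN hwt C = n - k + 1) :
    ∃ t : ℕ, 1 ≤ t ∧ ∀ (K : Type) [Field K] [Algebra 𝔽 K], finrank 𝔽 K = t →
      ∀ i, 1 ≤ i → i ≤ k →
        alphaN hwt (Submodule.span K
            {x : Fin n → K | ∃ v ∈ C, ∀ j, x j = algebraMap 𝔽 K (v j)}) i = n - i + 1 := by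
  refine ⟨n + 1, n.succ_pos, fun K _ _ hK i hi1 hik => ?_⟩
  have : Module.Finite 𝔽 K := Module.finite_of_finrank_eq_succ hK
  have : Finite K := Module.finite_of_finite 𝔽
  have hcard : 2 ^ Fintype.card (Fin n) < Nat.card K := by
    rw [Module.natCard_eq_pow_finrank (K := 𝔽), hK, Nat.card_eq_fintype_card, Fintype.card_fin]
    calc 2 ^ n < 2 ^ (n + 1) := Nat.pow_lt_pow_right one_lt_two n.lt_succ_self
      _ ≤ Fintype.card 𝔽 ^ (n + 1) := Nat.pow_le_pow_left Fintype.one_lt_card _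
  have hC : IsMDS C := isMDS_of_dminN_eq (by rwa [Fintype.card_fin, hk])
  have := (hC.codeBaseChange (K := K)).alphaN_eq hcard hi1
    (by rwa [finrank_codeBaseChange, hk])
  rwa [Fintype.card_fin] at this

/-- Let `C ⊆ 𝔽_q^n` be a `k`-dimensional MDS code (Hamming metric). Then there exists
`t ≥ 1` such that, over any degree-`t` field extension `K = 𝔽_{q^t}` of `𝔽_q`, the extended
code `C ⊗ 𝔽_{q^t}` satisfies `α_i^t(C) = n - i + 1` for all `1 ≤ i ≤ k`; i.e. it contains
a full chain of MDS subcodes of every dimension `i ≤ k`. -/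
theorem exists_extension_with_MDS_chain {𝔽 : Type} [Field 𝔽] [Fintype 𝔽] {n k : ℕ}
    (C : Submodule 𝔽 (Fin n → 𝔽)) (hC : C ≠ ⊥) (hk : finrank 𝔽 C = k) (hkn : k ≤ n)
    (hMDS : dminN hwt C = n - k + 1) :
    ∃ t : ℕ, 1 ≤ t ∧ ∀ (K : Type) [Field K] [Algebra 𝔽 K], finrank 𝔽 K = t →
      ∀ i, 1 ≤ i → i ≤ k →
        alphaN hwt (Submodule.span K
            {x : Fin n → K | ∃ v ∈ C, ∀ j, x j = algebraMap 𝔽 K (v j)}) i = n - i + 1 :=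
  exists_extension_with_MDS_chain_general C hk hMDS
end
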